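/- Let N, d ≥ 1, B > 0, let W ∈ ℝ^{N×N} be doubly stochastic with ‖W − (1/N)𝟙𝟙ᵀ‖_* ≤ 1, let ε ≥ 0 and τ ≥ 1 satisfy 6NBτε ≤ 1, and let (Θ^t)_{t∈ℕ} in ℝ^{N×d} satisfy Θ^{t+1} = WΘ^t + ε G^t for every t ≤ τ, where each G^t ∈ ℝ^{N×d} has rows g_i^t with ‖g_i^t‖ ≤ B(‖θ_i^t‖ + 1) (θ_i^t being the rows of Θ^t). Write θ̄^t for the row average and S^t for the consensus error of Θ^t. Then for every k ≤ τ, ‖θ̄^k − θ̄^0‖ ≤ (1/(3N)) (‖θ̄^0‖ + √(S^0) + 1). -/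

import Mathlib

/-- Euclidean norm of a vector in `ℝ^d` given as a plain function. -/
noncomputable def enorm {d : ℕ} (v : Fin d → ℝ) : ℝ :=
  ‖(WithLp.equiv 2 (Fin d → ℝ)).symm v‖

/-- Spectral (ℓ₂ operator) norm of a square matrix. -/
noncomputable def specNorm {N : ℕ} (M : Matrix (Fin N) (Fin N) ℝ) : ℝ :=
  ‖Matrix.toEuclideanCLM (𝕜 := ℝ) M‖

/-- A matrix is doubly stochastic: nonnegative entries, all row sums and column sums equal 1. -/
def DoublyStochastic {N : ℕ} (W : Matrix (Fin N) (Fin N) ℝ) : Prop :=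
  (∀ i j, 0 ≤ W i j) ∧ (∀ i, ∑ j, W i j = 1) ∧ (∀ j, ∑ i, W i j = 1)

/-- Row average of a matrix `Θ ∈ ℝ^{N×d}`: `θ̄ = (1/N) Θᵀ 𝟙`. -/
noncomputable def rowAvg {N d : ℕ} (Θ : Matrix (Fin N) (Fin d) ℝ) : Fin d → ℝ :=
  fun j => (N : ℝ)⁻¹ * ∑ i, Θ i j

/-- Consensus error `S = ∑ᵢ ‖θᵢ − θ̄‖²` of a matrix of stacked iterates. -/
noncomputable def consErr {N d : ℕ} (Θ : Matrix (Fin N) (Fin d) ℝ) : ℝ :=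
  ∑ i, (_root_.enorm (fun j => Θ i j - rowAvg Θ j)) ^ 2

/-!
The columns of `W` sum to one, so a mixing step `θᵢ ↦ ∑ₗ Wᵢₗ θₗ` preserves the sum of the rows
and does not increase the sum of their norms. Hence `bₜ = ∑ᵢ ‖θᵢᵗ‖ + N` grows by a factor of at
most `1 + εB` per step, so `bₜ ≤ exp (τεB) b₀ ≤ (6/5) b₀` for `t ≤ τ`, while the row sum moves by
at most `εB bₜ` per step. Summing over `k ≤ τ` steps and bounding `b₀ ≤ N (‖θ̄⁰‖ + √S⁰ + 1)` by
Cauchy–Schwarz gives the drift bound, even with `1/(5N)` in place of `1/(3N)`.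
-/

open Finset

lemma le_pow_mul_of_succ_le_mul {R : Type*} [CommSemiring R] [PartialOrder R] [IsOrderedRing R]
    {u : ℕ → R} {r : R} (hr : 0 ≤ r) {τ : ℕ} (hu : ∀ t < τ, u (t + 1) ≤ r * u t) :
    ∀ t ≤ τ, u t ≤ r ^ t * u 0 := by
  intro t ht
  induction t with
  | zero => simp
  | succ t ih =>
    calc u (t + 1) ≤ r * u t := hu t ht
      _ ≤ r * (r ^ t * u 0) := by gcongr; exact ih (by omega)
      _ = r ^ (t + 1) * u 0 := by ring

lemma one_add_pow_le_six_fifths {x : ℝ} (hx : 0 ≤ x) {t : ℕ} (htx : t * x ≤ 1 / 6) :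
    (1 + x) ^ t ≤ 6 / 5 :=
  calc (1 + x) ^ t ≤ Real.exp x ^ t := by
        gcongr; linarith [Real.add_one_le_exp x]
    _ = Real.exp (t * x) := (Real.exp_nat_mul x t).symm
    _ ≤ Real.exp (1 / 6) := Real.exp_le_exp.mpr htx
    _ ≤ 1 / (1 - 1 / 6) := Real.exp_bound_div_one_sub_of_interval (by norm_num) (by norm_num)
    _ = 6 / 5 := by norm_num

section NormSums

variable {ι E : Type*} [Fintype ι] [SeminormedAddCommGroup E]

lemma sum_norm_add_card_le (x : ι → E) (c : E) :
    ∑ i, ‖x i‖ + Fintype.card ι ≤ Fintype.card ι * (‖c‖ + √(∑ i, ‖x i - c‖ ^ 2) + 1) := by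
  have hcs : ∑ i, ‖x i - c‖ ≤ √(Fintype.card ι) * √(∑ i, ‖x i - c‖ ^ 2) := by
    simpa using Real.sum_mul_le_sqrt_mul_sqrt univ (fun _ => 1) (fun i => ‖x i - c‖)
  have hsqrt : √(Fintype.card ι : ℝ) ≤ Fintype.card ι := by
    rcases Nat.eq_zero_or_pos (Fintype.card ι) with h | h
    · simp [h]
    · exact Real.sqrt_le_self_iff.mpr (Or.inr (by exact_mod_cast h))
  calc ∑ i, ‖x i‖ + Fintype.card ι ≤ ∑ i, (‖x i - c‖ + ‖c‖) + Fintype.card ι := by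
        gcongr with i; exact norm_le_norm_sub_add _ _
    _ ≤ √(Fintype.card ι) * √(∑ i, ‖x i - c‖ ^ 2) + Fintype.card ι * ‖c‖ + Fintype.card ι := by
        rw [sum_add_distrib, sum_const, card_univ, nsmul_eq_mul]; linarith
    _ ≤ Fintype.card ι * (‖c‖ + √(∑ i, ‖x i - c‖ ^ 2) + 1) := by
        nlinarith [Real.sqrt_nonneg (∑ i, ‖x i - c‖ ^ 2)]

lemma sum_norm_le_mul_sum_norm_add_card {B : ℝ} {x g : ι → E}
    (hg : ∀ i, ‖g i‖ ≤ B * (‖x i‖ + 1)) :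
    ∑ i, ‖g i‖ ≤ B * (∑ i, ‖x i‖ + Fintype.card ι) :=
  calc ∑ i, ‖g i‖ ≤ ∑ i, B * (‖x i‖ + 1) := sum_le_sum fun i _ => hg i
    _ = B * (∑ i, ‖x i‖ + Fintype.card ι) := by
        rw [← mul_sum, sum_add_distrib, sum_const, card_univ, nsmul_one]

end NormSums

section Mixing

variable {ι E : Type*} [Fintype ι] [SeminormedAddCommGroup E] [NormedSpace ℝ E]
  {W : Matrix ι ι ℝ} {ε B : ℝ}

lemma sum_sum_smul_of_col_sum_eq_one (hWcol : ∀ l, ∑ i, W i l = 1) (x : ι → E) :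
    ∑ i, ∑ l, W i l • x l = ∑ l, x l := by
  rw [sum_comm]
  simp_rw [← sum_smul, hWcol, one_smul]

lemma sum_norm_sum_smul_le (hW0 : ∀ i l, 0 ≤ W i l) (hWcol : ∀ l, ∑ i, W i l = 1)
    (x : ι → E) : ∑ i, ‖∑ l, W i l • x l‖ ≤ ∑ l, ‖x l‖ :=
  calc ∑ i, ‖∑ l, W i l • x l‖ ≤ ∑ i, ∑ l, W i l • ‖x l‖ := by
        gcongr with i
        refine (norm_sum_le _ _).trans_eq (sum_congr rfl fun l _ => ?_)
        rw [norm_smul, Real.norm_of_nonneg (hW0 i l), smul_eq_mul]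
    _ = ∑ l, ‖x l‖ := sum_sum_smul_of_col_sum_eq_one hWcol _

variable {x x' g : ι → E}

lemma sum_norm_add_card_le_of_mixing_step (hW0 : ∀ i l, 0 ≤ W i l)
    (hWcol : ∀ l, ∑ i, W i l = 1) (hε : 0 ≤ ε) (hx' : ∀ i, x' i = ∑ l, W i l • x l + ε • g i)
    (hg : ∀ i, ‖g i‖ ≤ B * (‖x i‖ + 1)) :
    ∑ i, ‖x' i‖ + Fintype.card ι ≤ (1 + ε * B) * (∑ i, ‖x i‖ + Fintype.card ι) :=
  calc ∑ i, ‖x' i‖ + Fintype.card ι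
      ≤ ∑ i, (‖∑ l, W i l • x l‖ + ε * ‖g i‖) + Fintype.card ι := by
        gcongr with i
        rw [hx', ← norm_smul_of_nonneg hε]
        exact norm_add_le _ _
    _ ≤ ∑ i, ‖x i‖ + ε * (B * (∑ i, ‖x i‖ + Fintype.card ι)) + Fintype.card ι := by
        rw [sum_add_distrib, ← mul_sum]
        gcongr ?_ + ε * ?_ + _
        · exact sum_norm_sum_smul_le hW0 hWcol _
        · exact sum_norm_le_mul_sum_norm_add_card hg
    _ = (1 + ε * B) * (∑ i, ‖x i‖ + Fintype.card ι) := by ring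

lemma norm_sum_sub_sum_le_of_mixing_step (hWcol : ∀ l, ∑ i, W i l = 1) (hε : 0 ≤ ε)
    (hx' : ∀ i, x' i = ∑ l, W i l • x l + ε • g i) (hg : ∀ i, ‖g i‖ ≤ B * (‖x i‖ + 1)) :
    ‖∑ i, x' i - ∑ i, x i‖ ≤ ε * B * (∑ i, ‖x i‖ + Fintype.card ι) := by
  have hsum : ∑ i, x' i - ∑ i, x i = ε • ∑ i, g i := by
    simp_rw [hx', sum_add_distrib, sum_sum_smul_of_col_sum_eq_one hWcol, ← smul_sum,
      add_sub_cancel_left]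
  rw [hsum, norm_smul, Real.norm_of_nonneg hε, mul_assoc]
  gcongr
  exact (norm_sum_le _ _).trans (sum_norm_le_mul_sum_norm_add_card hg)

theorem norm_sum_sub_sum_le_of_mixing (hW0 : ∀ i l, 0 ≤ W i l)
    (hWcol : ∀ l, ∑ i, W i l = 1) (hε : 0 ≤ ε) (hB : 0 ≤ B) {τ : ℕ} {θ G : ℕ → ι → E}
    (hθ : ∀ t < τ, ∀ i, θ (t + 1) i = ∑ l, W i l • θ t l + ε • G t i)
    (hG : ∀ t i, ‖G t i‖ ≤ B * (‖θ t i‖ + 1)) (hsmall : τ * (ε * B) ≤ 1 / 6) :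
    ∀ k ≤ τ, ‖∑ i, θ k i - ∑ i, θ 0 i‖
      ≤ 6 / 5 * (τ * (ε * B)) * (∑ i, ‖θ 0 i‖ + Fintype.card ι) := by
  set b : ℕ → ℝ := fun t => ∑ i, ‖θ t i‖ + Fintype.card ι
  have hgrowth : ∀ t ≤ τ, b t ≤ 6 / 5 * b 0 := fun t ht =>
    calc b t ≤ (1 + ε * B) ^ t * b 0 := le_pow_mul_of_succ_le_mul (by positivity)
          (fun s hs => sum_norm_add_card_le_of_mixing_step hW0 hWcol hε (hθ s hs) (hG s)) t ht
      _ ≤ 6 / 5 * b 0 := by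
          gcongr
          refine one_add_pow_le_six_fifths (by positivity) (le_trans ?_ hsmall)
          gcongr
  intro k hk
  calc ‖∑ i, θ k i - ∑ i, θ 0 i‖ = dist (∑ i, θ 0 i) (∑ i, θ k i) := by
        rw [dist_comm, dist_eq_norm]
    _ ≤ ∑ t ∈ range k, dist (∑ i, θ t i) (∑ i, θ (t + 1) i) :=
        dist_le_range_sum_dist (fun t => ∑ i, θ t i) k
    _ ≤ ∑ t ∈ range k, ε * B * (6 / 5 * b 0) := by
        gcongr with t ht
        have htk : t < k := mem_range.mp ht
        rw [dist_comm, dist_eq_norm]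
        exact (norm_sum_sub_sum_le_of_mixing_step hWcol hε (hθ t (by omega)) (hG t)).trans
          (by gcongr; exact hgrowth t (by omega))
    _ ≤ 6 / 5 * (τ * (ε * B)) * b 0 := by
        rw [sum_const, card_range, nsmul_eq_mul]
        have hkτ : (k : ℝ) ≤ τ := by exact_mod_cast hk
        have := mul_le_mul_of_nonneg_right hkτ (by positivity : 0 ≤ ε * B * (6 / 5 * b 0))
        linarith

end Mixing

section Rows

variable {N d : ℕ}

lemma toLp_mul_add_smul_row (W : Matrix (Fin N) (Fin N) ℝ) (Θ G : Matrix (Fin N) (Fin d) ℝ)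
    (ε : ℝ) (i : Fin N) :
    WithLp.toLp 2 (fun j => (W * Θ + ε • G) i j)
      = ∑ l, W i l • WithLp.toLp 2 (fun j => Θ l j) + ε • WithLp.toLp 2 (fun j => G i j) := by
  ext j
  simp [Matrix.mul_apply]

lemma enorm_rowAvg_sub_rowAvg (Θ Θ' : Matrix (Fin N) (Fin d) ℝ) :
    _root_.enorm (fun j => rowAvg Θ' j - rowAvg Θ j)
      = (N : ℝ)⁻¹ *
        ‖∑ i, WithLp.toLp 2 (fun j => Θ' i j) - ∑ i, WithLp.toLp 2 (fun j => Θ i j)‖ := by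
  have hrow : WithLp.toLp 2 (fun j => rowAvg Θ' j - rowAvg Θ j) = (N : ℝ)⁻¹ •
      (∑ i, WithLp.toLp 2 (fun j => Θ' i j) - ∑ i, WithLp.toLp 2 (fun j => Θ i j)) := by
    ext j
    simp [rowAvg, mul_sub]
  rw [_root_.enorm, WithLp.equiv_symm_apply, hrow, norm_smul, Real.norm_of_nonneg (by positivity)]

lemma consErr_eq_sum_norm_sq (Θ : Matrix (Fin N) (Fin d) ℝ) :
    consErr Θ = ∑ i, ‖WithLp.toLp 2 (fun j => Θ i j) - WithLp.toLp 2 (rowAvg Θ)‖ ^ 2 := rfl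

end Rows

theorem average_drift_initial_general (N d : ℕ) (hN : 1 ≤ N)
    (B ε : ℝ) (hB : 0 < B) (hε : 0 ≤ ε)
    (W : Matrix (Fin N) (Fin N) ℝ) (hW : DoublyStochastic W)
    (τ : ℕ) (hstep : 6 * N * B * τ * ε ≤ 1)
    (Θ G : ℕ → Matrix (Fin N) (Fin d) ℝ)
    (hupdate : ∀ t, t ≤ τ → Θ (t + 1) = W * Θ t + ε • G t)
    (hG : ∀ t i, _root_.enorm (fun j => G t i j) ≤ B * (_root_.enorm (fun j => Θ t i j) + 1)) :
    ∀ k, k ≤ τ →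
      _root_.enorm (fun j => rowAvg (Θ k) j - rowAvg (Θ 0) j)
        ≤ (1 / (3 * N)) *
            (_root_.enorm (rowAvg (Θ 0)) + Real.sqrt (consErr (Θ 0)) + 1) := by
  intro k hk
  obtain ⟨hW0, -, hWcol⟩ := hW
  have hN' : (1 : ℝ) ≤ N := by exact_mod_cast hN
  have hsmall : τ * (ε * B) ≤ 1 / 6 := by
    nlinarith [mul_nonneg (mul_nonneg (Nat.cast_nonneg τ) hε) hB.le]
  set θ : ℕ → Fin N → EuclideanSpace ℝ (Fin d) := fun t i => WithLp.toLp 2 (fun j => Θ t i j)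
  have hdrift := norm_sum_sub_sum_le_of_mixing hW0 hWcol hε hB.le (θ := θ)
    (G := fun t i => WithLp.toLp 2 (fun j => G t i j))
    (fun t ht i => by simp only [θ, hupdate t ht.le, toLp_mul_add_smul_row]) hG
    hsmall k hk
  have hinit := sum_norm_add_card_le (θ 0) (WithLp.toLp 2 (rowAvg (Θ 0)))
  rw [Fintype.card_fin] at hdrift hinit
  rw [enorm_rowAvg_sub_rowAvg, consErr_eq_sum_norm_sq]
  set E := ‖WithLp.toLp 2 (rowAvg (Θ 0))‖ + √(∑ i, ‖θ 0 i - WithLp.toLp 2 (rowAvg (Θ 0))‖ ^ 2) + 1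
  have hrate : 6 / 5 * (τ * (ε * B)) ≤ 1 / (3 * N) := by
    rw [le_div_iff₀ (by positivity)]
    linarith
  calc (N : ℝ)⁻¹ * ‖∑ i, θ k i - ∑ i, θ 0 i‖
      ≤ (N : ℝ)⁻¹ * (6 / 5 * (τ * (ε * B)) * (N * E)) := by
        gcongr
        exact hdrift.trans (by gcongr)
    _ = 6 / 5 * (τ * (ε * B)) * E := by field_simp
    _ ≤ 1 / (3 * N) * E := by gcongr

/-- Drift of the average iterate from initialization: for all `k ≤ τ`,
`‖θ̄^k − θ̄^0‖ ≤ (1/(3N)) (‖θ̄^0‖ + √(S^0) + 1)`. -/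
theorem average_drift_initial (N d : ℕ) (hN : 1 ≤ N) (hd : 1 ≤ d)
    (B ε : ℝ) (hB : 0 < B) (hε : 0 ≤ ε)
    (W : Matrix (Fin N) (Fin N) ℝ) (hW : DoublyStochastic W)
    (hWspec : specNorm (W - (N : ℝ)⁻¹ •
      Matrix.of (fun (_ : Fin N) (_ : Fin N) => (1 : ℝ))) ≤ 1)
    (τ : ℕ) (hτ : 1 ≤ τ) (hstep : 6 * N * B * τ * ε ≤ 1)
    (Θ G : ℕ → Matrix (Fin N) (Fin d) ℝ)
    (hupdate : ∀ t, t ≤ τ → Θ (t + 1) = W * Θ t + ε • G t)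
    (hG : ∀ t i, _root_.enorm (fun j => G t i j) ≤ B * (_root_.enorm (fun j => Θ t i j) + 1)) :
    ∀ k, k ≤ τ →
      _root_.enorm (fun j => rowAvg (Θ k) j - rowAvg (Θ 0) j)
        ≤ (1 / (3 * N)) *
            (_root_.enorm (rowAvg (Θ 0)) + Real.sqrt (consErr (Θ 0)) + 1) :=
  average_drift_initial_general N d hN B ε hB hε W hW τ hstep Θ G hupdate hG
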